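/- arXiv:2203.07592 — 7 statements merged into one kernel-verified Lean document; each statement's English description precedes it below -/
import Mathlib

section
/- Let G be a finite p-group. Then G is minimal non-abelian (i.e., G is non-abelian but every proper subgroup of G is abelian) if and only if G can be generated by two elements and the commutator subgroup G' has order p. -/
/-- `G` is a minimal non-abelian group: non-abelian, but all proper subgroups abelian. -/
def IsMinimalNonabelian (G : Type*) [Group G] : Prop :=
  (¬ ∀ a b : G, a * b = b * a) ∧
    ∀ H : Subgroup G, H ≠ ⊤ → ∀ a ∈ H, ∀ b ∈ H, a * b = b * a

/-- `G` is an `𝒜_t`-group: it has a non-abelian subgroup of index `p ^ (t-1)`,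
but all subgroups of index `p ^ t` are abelian. -/
def IsAGroup (p t : ℕ) (G : Type*) [Group G] : Prop :=
  (∃ H : Subgroup G, H.index = p ^ (t - 1) ∧ ¬ ∀ a ∈ H, ∀ b ∈ H, a * b = b * a) ∧
    ∀ H : Subgroup G, H.index = p ^ t → ∀ a ∈ H, ∀ b ∈ H, a * b = b * a

/-!
If `G` is minimal non-abelian and `a`, `b` do not commute, the centralizers of `a` and `b` are
maximal subgroups, hence normal of index `p`. So `c = ⁅a, b⁆` commutes with `a` and `b`, i.e. is
central, and `c ^ p = ⁅a ^ p, b⁆ = 1`; since `G ⧸ ⟨c⟩` is generated by two commuting elements,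
`G' = ⟨c⟩` has order `p`.

Conversely, if `G = ⟨a, b⟩` and `|G'| = p`, then `G'` is central (a normal subgroup of order `p`
of a `p`-group), hence so is every `g ^ p`.
A maximal subgroup `M` contains `G'`, `a ^ p`, `b ^ p`, so `K = M ⊓ Z(G)` has index at most `p²`,
hence `|M : K| ≤ p`: `M` is cyclic modulo a central subgroup, hence abelian.
-/

open Subgroup
open scoped commutatorElement Pointwise

section TwoGenerated

variable {G : Type*} [Group G]

theorem commutatorElement_pow_left_of_commute {g x : G} (h : Commute ⁅g, x⁆ g) (n : ℕ) :
    ⁅g ^ n, x⁆ = ⁅g, x⁆ ^ n := by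
  induction n with
  | zero => simp
  | succ n ih =>
    rw [pow_succ', commutatorElement_mul_left_eq_conj_mul, ih, ← (h.pow_left n).eq,
      mul_inv_cancel_right, pow_succ]

theorem isMulCommutative_of_closure_pair_eq_top {a b : G} (hgen : closure {a, b} = ⊤)
    (hab : Commute a b) : IsMulCommutative G := by
  have := isMulCommutative_closure (k := {a, b}) <| by
    rintro _ (rfl | rfl) _ (rfl | rfl) <;> simp [hab.eq]
  rw [hgen] at this
  exact ⟨⟨fun x y => setLike_mul_comm (mem_top x) (mem_top y)⟩⟩

theorem closure_pair_map_eq_top {H : Type*} [Group H] {a b : G} (hgen : closure {a, b} = ⊤)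
    {f : G →* H} (hf : Function.Surjective f) : closure {f a, f b} = ⊤ := by
  rw [← Set.image_pair, ← MonoidHom.map_closure, hgen, ← MonoidHom.range_eq_map,
    MonoidHom.range_eq_top.mpr hf]

theorem commute_mk_of_commutatorElement_mem {N : Subgroup G} [N.Normal] {a b : G}
    (h : ⁅a, b⁆ ∈ N) : Commute (a : G ⧸ N) (b : G ⧸ N) := by
  rw [← commutatorElement_eq_one_iff_commute]
  exact (QuotientGroup.eq_one_iff _).mpr h

theorem commutator_le_of_closure_pair_eq_top {a b : G} (hgen : closure {a, b} = ⊤)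
    {N : Subgroup G} [N.Normal] (h : ⁅a, b⁆ ∈ N) : commutator G ≤ N :=
  Normal.quotient_commutative_iff_commutator_le.mp <|
    isMulCommutative_of_closure_pair_eq_top (closure_pair_map_eq_top hgen
      (QuotientGroup.mk'_surjective N)) (commute_mk_of_commutatorElement_mem h)

theorem mem_center_of_closure_pair_eq_top {a b z : G} (hgen : closure {a, b} = ⊤)
    (ha : Commute z a) (hb : Commute z b) : z ∈ center G := by
  have hle : closure {a, b} ≤ centralizer {z} := by
    rw [closure_le]
    rintro _ (rfl | rfl)
    · exact mem_centralizer_singleton_iff.mpr ha.eq.symm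
    · exact mem_centralizer_singleton_iff.mpr hb.eq.symm
  rw [hgen, top_le_iff, centralizer_eq_top_iff_subset, Set.singleton_subset_iff] at hle
  exact hle

theorem Subgroup.normal_of_le_center {N : Subgroup G} (h : N ≤ center G) : N.Normal :=
  ⟨fun n hn g => by rwa [mem_center_iff.mp (h hn) g, mul_inv_cancel_right]⟩

theorem card_le_orderOf_mul_orderOf {a b : G} (hgen : closure {a, b} = ⊤) (hab : Commute a b) :
    Nat.card G ≤ orderOf a * orderOf b := by
  have := isMulCommutative_of_closure_pair_eq_top hgen hab
  have hsup : zpowers a ⊔ zpowers b = ⊤ := by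
    rw [zpowers_eq_closure, zpowers_eq_closure, ← Subgroup.closure_union, Set.singleton_union,
      hgen]
  calc Nat.card G = Nat.card ((zpowers a : Set G) * (zpowers b : Set G)) := by
        rw [← mul_normal, hsup, coe_top, Nat.card_univ]
    _ ≤ Nat.card (zpowers a) * Nat.card (zpowers b) := Set.natCard_mul_le
    _ = orderOf a * orderOf b := by rw [Nat.card_zpowers, Nat.card_zpowers]

theorem index_le_sq_of_closure_pair_eq_top {a b : G} (hgen : closure {a, b} = ⊤)
    {n : ℕ} (hn : 0 < n) {N : Subgroup G} [N.Normal] (hab : ⁅a, b⁆ ∈ N) (ha : a ^ n ∈ N)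
    (hb : b ^ n ∈ N) : N.index ≤ n ^ 2 := by
  have horder {g : G} (hg : g ^ n ∈ N) : orderOf (g : G ⧸ N) ≤ n :=
    orderOf_le_of_pow_eq_one hn <| by rwa [← QuotientGroup.mk_pow, QuotientGroup.eq_one_iff]
  rw [index_eq_card, sq]
  exact (card_le_orderOf_mul_orderOf (closure_pair_map_eq_top hgen
    (QuotientGroup.mk'_surjective N)) (commute_mk_of_commutatorElement_mem hab)).trans
    (Nat.mul_le_mul (horder ha) (horder hb))

end TwoGenerated

namespace IsPGroup

variable {p : ℕ} [Fact p.Prime] {G : Type*} [Group G] [Finite G] (hG : IsPGroup p G)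
include hG

theorem normal_of_isCoatom {M : Subgroup G} (hM : IsCoatom M) : M.Normal :=
  have := hG.isNilpotent
  NormalizerCondition.normal_of_coatom M Group.normalizerCondition_of_isNilpotent hM

theorem index_eq_of_isCoatom {M : Subgroup G} (hM : IsCoatom M) : M.index = p := by
  have hp : p.Prime := Fact.out
  obtain ⟨n, hn⟩ := (hG.to_subgroup M).exists_card_eq
  obtain ⟨k, hk⟩ := hG.index M
  have hk0 : k ≠ 0 := by
    rintro rfl
    exact hM.1 (index_eq_one.mp hk)
  have hdvd : p ^ (n + 1) ∣ Nat.card G := by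
    rw [← M.card_mul_index, hn, hk, pow_succ]
    exact mul_dvd_mul_left _ (dvd_pow_self p hk0)
  obtain ⟨K, hK, hMK⟩ := Sylow.exists_subgroup_card_pow_succ hdvd hn
  have hMK' : M ≠ K := by
    rintro rfl
    exact (Nat.pow_lt_pow_right hp.one_lt n.lt_succ_self).ne (hn.symm.trans hK)
  rw [hM.2 K (lt_of_le_of_ne hMK hMK'), card_top, ← M.card_mul_index, hn, pow_succ] at hK
  exact Nat.eq_of_mul_eq_mul_left (pow_pos hp.pos n) hK

theorem le_center_of_card_eq_prime {N : Subgroup G} [N.Normal] (hN : Nat.card N = p) :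
    N ≤ center G := by
  have hmod := (hG.of_equiv ConjAct.toConjAct).card_modEq_card_fixedPoints N
  rw [hN] at hmod
  have hfix : p ∣ Nat.card (MulAction.fixedPoints (ConjAct G) N) :=
    Nat.modEq_zero_iff_dvd.mp (hmod.symm.trans (Nat.modEq_zero_iff_dvd.mpr dvd_rfl))
  have huniv : MulAction.fixedPoints (ConjAct G) N = Set.univ := by
    rw [Set.eq_univ_iff_ncard, ← Nat.card_coe_set_eq, hN]
    refine le_antisymm (hN ▸ Finite.card_subtype_le _) (Nat.le_of_dvd ?_ hfix)
    exact Nat.card_pos_iff.mpr ⟨⟨1, fun g => by simp⟩, inferInstance⟩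
  intro x hx
  rw [mem_center_iff]
  intro g
  have := congrArg Subtype.val ((Set.eq_univ_iff_forall.mp huniv ⟨x, hx⟩) (ConjAct.toConjAct g))
  rwa [ConjAct.Subgroup.val_conj_smul, ConjAct.toConjAct_smul, mul_inv_eq_iff_eq_mul] at this

theorem commutator_le_of_isCoatom {M : Subgroup G} (hM : IsCoatom M) : commutator G ≤ M := by
  have := hG.normal_of_isCoatom hM
  have : IsCyclic (G ⧸ M) := isCyclic_of_card_dvd_prime (p := p) <| by
    rw [← index_eq_card, hG.index_eq_of_isCoatom hM]
  exact Normal.quotient_commutative_iff_commutator_le.mp inferInstance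

theorem pow_mem_center_of_card_commutator (hcard : Nat.card (commutator G) = p) (g : G) :
    g ^ p ∈ center G := by
  rw [mem_center_iff]
  intro x
  have hc : ⁅g, x⁆ ∈ commutator G := commutator_mem_commutator (mem_top g) (mem_top x)
  have hcg : Commute ⁅g, x⁆ g :=
    (mem_center_iff.mp (hG.le_center_of_card_eq_prime hcard hc) g).symm
  have hcp : ⁅g, x⁆ ^ p = 1 := by
    rw [← hcard, ← Subgroup.coe_mk (commutator G) _ hc, ← coe_pow, pow_card_eq_one', coe_one]
  rw [← commutatorElement_pow_left_of_commute hcg, commutatorElement_eq_one_iff_commute] at hcp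
  exact hcp.eq.symm

theorem isMulCommutative_of_isCoatom {a b : G} (hgen : closure {a, b} = ⊤)
    (hcard : Nat.card (commutator G) = p) {M : Subgroup G} (hM : IsCoatom M) :
    IsMulCommutative M := by
  have hp : p.Prime := Fact.out
  have := hG.normal_of_isCoatom hM
  have hMidx := hG.index_eq_of_isCoatom hM
  set K := M ⊓ center G
  have hpowK (g : G) : g ^ p ∈ K :=
    ⟨hMidx ▸ M.pow_index_mem g, hG.pow_mem_center_of_card_commutator hcard g⟩
  have hc : ⁅a, b⁆ ∈ commutator G := commutator_mem_commutator (mem_top a) (mem_top b)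
  have hKidx : K.index ≤ p ^ 2 := index_le_sq_of_closure_pair_eq_top hgen hp.pos
    ⟨hG.commutator_le_of_isCoatom hM hc, hG.le_center_of_card_eq_prime hcard hc⟩
    (hpowK a) (hpowK b)
  have hrel : K.relIndex M ∣ p := by
    obtain ⟨k, hk⟩ := (hG.to_subgroup M).index (K.subgroupOf M)
    have hmul := relIndex_mul_index (inf_le_left : K ≤ M)
    rw [relIndex, hk, hMidx, ← pow_succ] at hmul
    rw [relIndex, hk]
    refine (pow_dvd_pow p ?_).trans (pow_one p).dvd
    have := (Nat.pow_le_pow_iff_right hp.one_lt).mp (hmul ▸ hKidx)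
    omega
  have : IsCyclic (M ⧸ K.subgroupOf M) :=
    isCyclic_of_card_dvd_prime (p := p) (by rwa [← index_eq_card])
  refine (QuotientGroup.mk' (K.subgroupOf M)).isMulCommutative_of_isCyclic_of_ker_le_center ?_
  rw [QuotientGroup.ker_mk']
  intro x hx
  rw [mem_subgroupOf] at hx
  exact mem_center_iff.mpr fun g => Subtype.ext (mem_center_iff.mp hx.2 g)

end IsPGroup

namespace IsMinimalNonabelian

variable {G : Type*} [Group G] (h : IsMinimalNonabelian G)
include h

theorem closure_pair_eq_top {a b : G} (hab : a * b ≠ b * a) : closure {a, b} = ⊤ := by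
  by_contra hne
  exact hab (h.2 _ hne a (subset_closure (by simp)) b (subset_closure (by simp)))

theorem isCoatom_centralizer {a b : G} (hab : a * b ≠ b * a) : IsCoatom (centralizer {a}) := by
  refine ⟨fun htop => hab (mem_centralizer_singleton_iff.mp (htop ▸ mem_top b)).symm,
    fun K hK => ?_⟩
  by_contra hKtop
  have haK : a ∈ K := hK.le (mem_centralizer_singleton_iff.mpr rfl)
  exact hK.not_ge fun k hk => mem_centralizer_singleton_iff.mpr (h.2 K hKtop k hk a haK)

theorem card_commutator {p : ℕ} [Fact p.Prime] [Finite G] (hG : IsPGroup p G) {a b : G}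
    (hab : a * b ≠ b * a) : Nat.card (commutator G) = p := by
  have hgen := h.closure_pair_eq_top hab
  have hA := h.isCoatom_centralizer hab
  have hB := h.isCoatom_centralizer (Ne.symm hab)
  have := hG.normal_of_isCoatom hA
  have := hG.normal_of_isCoatom hB
  set c := ⁅a, b⁆
  have hcA : c ∈ centralizer {a} := commutator_le_left _ ⊤ <|
    commutator_mem_commutator (mem_centralizer_singleton_iff.mpr rfl) (mem_top b)
  have hcB : c ∈ centralizer {b} := commutator_le_right ⊤ _ <|
    commutator_mem_commutator (mem_top a) (mem_centralizer_singleton_iff.mpr rfl)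
  have hcZ : c ∈ center G := mem_center_of_closure_pair_eq_top hgen
    (mem_centralizer_singleton_iff.mp hcA) (mem_centralizer_singleton_iff.mp hcB)
  have hapB : a ^ p ∈ centralizer {b} := hG.index_eq_of_isCoatom hB ▸ pow_index_mem _ a
  have hcp : c ^ p = 1 := by
    rw [← commutatorElement_pow_left_of_commute (mem_center_iff.mp hcZ a).symm,
      commutatorElement_eq_one_iff_mul_comm]
    exact mem_centralizer_singleton_iff.mp hapB
  have hc1 : c ≠ 1 := fun h1 => hab (commutatorElement_eq_one_iff_mul_comm.mp h1)
  have := normal_of_le_center (zpowers_le.mpr hcZ)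
  have heq : commutator G = zpowers c :=
    le_antisymm (commutator_le_of_closure_pair_eq_top hgen (mem_zpowers c))
      (zpowers_le.mpr (commutator_mem_commutator (mem_top a) (mem_top b)))
  rw [heq, Nat.card_zpowers, orderOf_eq_prime hcp hc1]

end IsMinimalNonabelian

theorem isMinimalNonabelian_of_card_commutator {p : ℕ} [Fact p.Prime] {G : Type*} [Group G]
    [Finite G] (hG : IsPGroup p G) {a b : G} (hgen : closure {a, b} = ⊤)
    (hcard : Nat.card (commutator G) = p) : IsMinimalNonabelian G := by
  refine ⟨fun hcomm => ?_, fun H hH x hx y hy => ?_⟩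
  · rw [(commutator_eq_bot_iff G).mpr ⟨⟨hcomm⟩⟩, card_bot] at hcard
    exact (Fact.out : p.Prime).one_lt.ne hcard
  · obtain ⟨M, hM, hHM⟩ := (eq_top_or_exists_le_coatom H).resolve_left hH
    have := hG.isMulCommutative_of_isCoatom hgen hcard hM
    exact setLike_mul_comm (hHM hx) (hHM hy)

theorem stmt0 {p : ℕ} (hp : p.Prime) {G : Type*} [Group G] [Finite G]
    (hG : IsPGroup p G) :
    IsMinimalNonabelian G ↔
      (∃ a b : G, Subgroup.closure {a, b} = ⊤) ∧ Nat.card (commutator G) = p := by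
  have := Fact.mk hp
  constructor
  · intro h
    obtain ⟨a, b, hab⟩ : ∃ a b : G, a * b ≠ b * a := by simpa using h.1
    exact ⟨⟨a, b, h.closure_pair_eq_top hab⟩, h.card_commutator hG hab⟩
  · rintro ⟨⟨a, b, hgen⟩, hcard⟩
    exact isMinimalNonabelian_of_card_commutator hG hgen hcard
end

section
/- Let G be a finite p-group and let M₁ and M₂ be two distinct maximal subgroups of G. Then |G'| ≤ p · |M₁' M₂'|, where M₁'M₂' denotes the subgroup generated by the derived subgroups of M₁ and M₂. -/
/-!
Maximal subgroups of a finite `p`-group are normal of index `p`, so they contain `G'`.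
Put `N = M₁'M₂'` and `Q = G/N`. The images `A = M₁/N` and `B = M₂/N` are abelian and contain
`Q'`, and `A ⊔ B = Q`, so `Q' ≤ A ⊓ B` is central. Then `x ↦ ⁅x, b⁆` is a homomorphism for every
`b`; taking `b ∈ B \ A`, its image contains `Q'` because `Q = A⟨b⟩` with `A` abelian, and its
kernel contains `B`. Hence `|Q'| ≤ |Q : B| = p`, and `|G'| = |N| |Q'|`.
-/

open Subgroup
open scoped commutatorElement

section Commutator

variable {Q : Type*} [Group Q]

theorem inf_le_center_of_sup_eq_top {A B : Subgroup Q} (hA : ⁅A, A⁆ = ⊥) (hB : ⁅B, B⁆ = ⊥)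
    (hAB : A ⊔ B = ⊤) : A ⊓ B ≤ center Q := by
  rw [commutator_eq_bot_iff_le_centralizer] at hA hB
  have : A ⊓ B ≤ centralizer (A ⊔ B : Subgroup Q) :=
    le_centralizer_iff.mpr (sup_le (le_centralizer_iff.mpr (inf_le_left.trans hA))
      (le_centralizer_iff.mpr (inf_le_right.trans hB)))
  rwa [hAB, coe_top, centralizer_univ] at this

theorem commutatorElement_mem_center (hQ : commutator Q ≤ center Q) (x y : Q) :
    ⁅x, y⁆ ∈ center Q :=
  hQ (_root_.commutator_def Q ▸ commutator_mem_commutator (mem_top x) (mem_top y))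

@[simps]
def commutatorElementHom (hQ : commutator Q ≤ center Q) (b : Q) : Q →* Q where
  toFun x := ⁅x, b⁆
  map_one' := by simp
  map_mul' x y := by
    have hy := mem_center_iff.mp (commutatorElement_mem_center hQ y b)
    calc ⁅x * y, b⁆ = x * ⁅y, b⁆ * x⁻¹ * ⁅x, b⁆ := by simp only [commutatorElement_def]; group
      _ = ⁅y, b⁆ * ⁅x, b⁆ := by rw [hy x]; group
      _ = ⁅x, b⁆ * ⁅y, b⁆ := (hy _).symm

theorem commutator_sup_zpowers_le (hQ : commutator Q ≤ center Q) {H L R : Subgroup Q} {b : Q}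
    (hH : ⁅H, L⁆ ≤ R) (hb : ∀ y ∈ L, ⁅b, y⁆ ∈ R) : ⁅H ⊔ zpowers b, L⁆ ≤ R := by
  rw [commutator_le] at hH ⊢
  intro x hx y hy
  have : H ⊔ zpowers b ≤ R.comap (commutatorElementHom hQ y) :=
    sup_le (fun h hh ↦ hH h hh y hy) (zpowers_le.mpr (hb y hy))
  exact this hx

theorem commutator_le_of_sup_zpowers_eq_top (hQ : commutator Q ≤ center Q) {A R : Subgroup Q}
    {b : Q} (hA : ⁅A, A⁆ = ⊥) (hAb : A ⊔ zpowers b = ⊤) (hb : ∀ y, ⁅b, y⁆ ∈ R) :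
    commutator Q ≤ R := by
  have hAR : ⁅A, ⊤⁆ ≤ R := by
    rw [commutator_comm, ← hAb]
    exact commutator_sup_zpowers_le hQ (hA ▸ bot_le) fun y _ ↦ hb y
  calc commutator Q = ⁅A ⊔ zpowers b, ⊤⁆ := by rw [hAb, _root_.commutator_def]
    _ ≤ R := commutator_sup_zpowers_le hQ hAR fun y _ ↦ hb y

theorem card_commutator_le_index {A B : Subgroup Q} [B.FiniteIndex] {b : Q} (hA : ⁅A, A⁆ = ⊥)
    (hB : ⁅B, B⁆ = ⊥) (hQA : commutator Q ≤ A) (hQB : commutator Q ≤ B) (hb : b ∈ B)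
    (hAb : A ⊔ zpowers b = ⊤) :
    Nat.card (commutator Q) ≤ B.index := by
  have hAB : A ⊔ B = ⊤ := top_le_iff.mp (hAb ▸ sup_le_sup_left (zpowers_le.mpr hb) A)
  have hQ : commutator Q ≤ center Q :=
    (le_inf hQA hQB).trans (inf_le_center_of_sup_eq_top hA hB hAB)
  let φ := commutatorElementHom hQ b
  have hφ : commutator Q ≤ φ.range := commutator_le_of_sup_zpowers_eq_top hQ hA hAb fun y ↦
    commutatorElement_inv y b ▸ inv_mem (MonoidHom.mem_range.mpr ⟨y, rfl⟩)
  have hBφ : B ≤ φ.ker := fun x hx ↦ by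
    rw [MonoidHom.mem_ker, commutatorElementHom_apply, ← mem_bot, ← hB]
    exact commutator_mem_commutator hx hb
  have := finiteIndex_of_le hBφ
  have : Finite φ.range := Finite.of_equiv _ (QuotientGroup.quotientKerEquivRange φ).toEquiv
  calc Nat.card (commutator Q) ≤ Nat.card φ.range := card_le_of_le hφ
    _ = φ.ker.index := (index_ker φ).symm
    _ ≤ B.index := index_antitone hBφ

end Commutator

section Quotient

variable {G H : Type*} [Group G] [Group H]

theorem MonoidHom.map_commutator_of_surjective (f : G →* H) (hf : Function.Surjective f) :
    (commutator G).map f = commutator H := by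
  rw [map_commutator_eq, f.range_eq_top_of_surjective hf, _root_.commutator_def]

theorem MonoidHom.card_commutator_eq (f : G →* H) (hf : Function.Surjective f)
    (hker : f.ker ≤ commutator G) :
    Nat.card (commutator G) = Nat.card f.ker * Nat.card (commutator H) := by
  rw [← relIndex_bot_left, ← relIndex_mul_relIndex _ _ _ bot_le hker, relIndex_bot_left,
    relIndex_ker, f.map_commutator_of_surjective hf]

theorem card_commutator_le_index_mul_card_sup {M₁ M₂ : Subgroup G} [M₂.FiniteIndex]
    (hM₁ : commutator G ≤ M₁) (hM₂ : commutator G ≤ M₂) {g : G} (hg : g ∈ M₂)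
    (hM₁g : M₁ ⊔ zpowers g = ⊤) :
    Nat.card (commutator G) ≤ M₂.index * Nat.card (⁅M₁, M₁⁆ ⊔ ⁅M₂, M₂⁆ : Subgroup G) := by
  have := Normal.of_commutator_le G hM₁
  have := Normal.of_commutator_le G hM₂
  set N := ⁅M₁, M₁⁆ ⊔ ⁅M₂, M₂⁆
  set π := QuotientGroup.mk' N
  have hπ : Function.Surjective π := QuotientGroup.mk'_surjective N
  have hN : N ≤ commutator G :=
    sup_le (commutator_mono le_top le_top) (commutator_mono le_top le_top)
  have hker : π.ker = N := QuotientGroup.ker_mk' N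
  have hNM₂ : N ≤ M₂ := sup_le ((commutator_mono le_top le_top).trans hM₂) (commutator_le_self M₂)
  have hindex : (M₂.map π).index = M₂.index := M₂.index_map_eq hπ (hker.le.trans hNM₂)
  have : (M₂.map π).FiniteIndex := ⟨hindex ▸ FiniteIndex.index_ne_zero⟩
  rw [π.card_commutator_eq hπ (hker.le.trans hN), hker, mul_comm, ← hindex]
  refine Nat.mul_le_mul_right _ (card_commutator_le_index (A := M₁.map π) (b := π g) ?_ ?_ ?_ ?_
    (mem_map_of_mem π hg) ?_)
  · rw [← map_commutator, Subgroup.map_eq_bot_iff, hker]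
    exact le_sup_left
  · rw [← map_commutator, Subgroup.map_eq_bot_iff, hker]
    exact le_sup_right
  · exact π.map_commutator_of_surjective hπ ▸ map_mono hM₁
  · exact π.map_commutator_of_surjective hπ ▸ map_mono hM₂
  · rw [← π.map_zpowers, ← Subgroup.map_sup, hM₁g, map_top_of_surjective π hπ]

end Quotient

section PGroup

variable {p : ℕ} {G : Type*} [Group G] [Finite G]

theorem IsPGroup.index_eq_of_isCoatom_s3 (hp : p.Prime) (hG : IsPGroup p G) {M : Subgroup G}
    (hM : IsCoatom M) : M.index = p := by
  have := Fact.mk hp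
  obtain ⟨n, hn⟩ := IsPGroup.iff_card.mp (hG.to_subgroup M)
  obtain ⟨m, hm⟩ := hG.index M
  have hm0 : m ≠ 0 := by rintro rfl; exact hM.1 (index_eq_one.mp hm)
  have hdvd : p ^ (n + 1) ∣ Nat.card G := by
    rw [← M.card_mul_index, hn, hm, pow_succ]
    exact mul_dvd_mul_left _ (dvd_pow_self p hm0)
  obtain ⟨K, hK, hMK⟩ := Sylow.exists_subgroup_card_pow_succ hdvd hn
  have hMK' : M ≠ K := by
    rintro rfl
    exact (pow_lt_pow_right₀ hp.one_lt n.lt_succ_self).ne (hn.symm.trans hK)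
  have hKtop : K = ⊤ := hM.2 K (lt_of_le_of_ne hMK hMK')
  have hcard := M.card_mul_index
  rw [hn, ← card_top, ← hKtop, hK, pow_succ] at hcard
  exact Nat.eq_of_mul_eq_mul_left (pow_pos hp.pos n) hcard

theorem IsPGroup.commutator_le_of_isCoatom_s3 (hp : p.Prime) (hG : IsPGroup p G) {M : Subgroup G}
    (hM : IsCoatom M) : commutator G ≤ M := by
  have := Fact.mk hp
  have := hG.isNilpotent
  have := NormalizerCondition.normal_of_coatom M Group.normalizerCondition_of_isNilpotent hM
  have : IsCyclic (G ⧸ M) :=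
    isCyclic_of_prime_card (p := p) (by rw [← index_eq_card, hG.index_eq_of_isCoatom_s3 hp hM])
  exact Normal.quotient_commutative_iff_commutator_le.mp inferInstance

end PGroup

theorem stmt3 {p : ℕ} (hp : p.Prime) {G : Type*} [Group G] [Finite G]
    (hG : IsPGroup p G) {M₁ M₂ : Subgroup G} (h₁ : IsCoatom M₁) (h₂ : IsCoatom M₂)
    (hne : M₁ ≠ M₂) :
    Nat.card (commutator G) ≤
      p * Nat.card
        ((commutator ↥M₁).map M₁.subtype ⊔ (commutator ↥M₂).map M₂.subtype : Subgroup G) := by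
  obtain ⟨g, hg₂, hg₁⟩ := SetLike.not_le_iff_exists.mp fun h ↦ (h₂.le_iff.mp h).elim h₁.1 hne
  have hM₁g : M₁ ⊔ zpowers g = ⊤ := h₁.2 _ (left_lt_sup.mpr (zpowers_le.not.mpr hg₁))
  rw [map_subtype_commutator, map_subtype_commutator, ← hG.index_eq_of_isCoatom_s3 hp h₂]
  exact card_commutator_le_index_mul_card_sup (hG.commutator_le_of_isCoatom_s3 hp h₁)
    (hG.commutator_le_of_isCoatom_s3 hp h₂) hg₂ hM₁g
end

section
/- Let p be an odd prime and G a finite p-group such that |G'| = p and G is a central product G = H * C where H is a non-abelian subgroup of order p³, C is cyclic, and H ∩ C = G'. Then every subgroup K of G that is an A₂-group (non-abelian with a non-abelian subgroup of index p, but all subgroups of index p² abelian) satisfies d(K) ≥ 3. -/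
open Subgroup
open scoped commutatorElement

theorem Subgroup.normal_of_le_center_s6 {G : Type*} [Group G] {J : Subgroup G}
    (hJ : J ≤ center G) : J.Normal :=
  ⟨fun n hn g ↦ by rwa [mem_center_iff.mp (hJ hn) g, mul_inv_cancel_right]⟩

theorem Subgroup.comap_subtype_center_le_center {G : Type*} [Group G] (K : Subgroup G) :
    (center G).comap K.subtype ≤ center K :=
  fun _ hk ↦ mem_center_iff.mpr fun g ↦ Subtype.ext (mem_center_iff.mp hk g)

theorem IsPGroup.normal_of_index_eq_prime {p : ℕ} [hp : Fact p.Prime] {K : Type*} [Group K]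
    [Finite K] (hK : IsPGroup p K) {N : Subgroup K} (hN : N.index = p) : N.Normal := by
  obtain ⟨n, hn⟩ := IsPGroup.iff_card.mp hK
  have hn0 : n ≠ 0 := by
    rintro rfl
    have := N.index_dvd_card
    rw [hN, hn, pow_zero, Nat.dvd_one] at this
    exact hp.out.one_lt.ne' this
  exact normal_of_index_eq_minFac_card (by rw [hN, hn, Nat.pow_minFac hn0, hp.out.minFac_eq])

theorem IsPGroup.card_dvd_prime_of_index_eq_prime {p : ℕ} [hp : Fact p.Prime] {Q : Type*}
    [Group Q] [Finite Q] (hQ : IsPGroup p Q) (hcard : Nat.card Q ≤ p ^ 2) {M : Subgroup Q}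
    (hM : M.index = p) : Nat.card M ∣ p := by
  obtain ⟨m, hm⟩ := IsPGroup.iff_card.mp (hQ.to_subgroup M)
  have hle : p ^ (m + 1) ≤ p ^ 2 := calc
    p ^ (m + 1) = Nat.card M * M.index := by rw [hm, hM, pow_succ]
    _ = Nat.card Q := card_mul_index M
    _ ≤ p ^ 2 := hcard
  rw [pow_le_pow_iff_right₀ hp.out.one_lt] at hle
  rw [hm]
  simpa using pow_dvd_pow p (show m ≤ 1 by omega)

theorem card_le_pow_card_of_closure_eq_top {Q : Type*} [CommGroup Q] {n : ℕ} (hn : 0 < n)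
    (hexp : ∀ q : Q, q ^ n = 1) {S : Finset Q} (hS : closure (S : Set Q) = ⊤) :
    Nat.card Q ≤ n ^ S.card := by
  have hsurj : Function.Surjective fun a : S → Fin n ↦ ∏ i : S, i.1 ^ (a i : ℕ) := by
    intro q
    have hq : q ∈ Submonoid.closure (S : Set Q) := by
      rw [← closure_toSubmonoid_of_isOfFinOrder fun x _ ↦
        isOfFinOrder_iff_pow_eq_one.mpr ⟨n, hn, hexp x⟩, hS]
      trivial
    obtain ⟨a, rfl⟩ := Submonoid.mem_closure_finset'.mp hq
    exact ⟨fun i ↦ ⟨a i % n, Nat.mod_lt _ hn⟩,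
      Finset.prod_congr rfl fun i _ ↦ (pow_eq_pow_mod _ (hexp i)).symm⟩
  calc Nat.card Q ≤ Nat.card (S → Fin n) := Nat.card_le_card_of_surjective _ hsurj
    _ = n ^ S.card := by simp [Nat.card_fun]

theorem pow_mem_center_of_card_eq_prime_pow_three {p : ℕ} (hp : p.Prime) {H : Type*} [Group H]
    (hcard : Nat.card H = p ^ 3) (hna : ¬ IsMulCommutative H) (h : H) :
    h ^ p ∈ center H := by
  have : Fact p.Prime := ⟨hp⟩
  have : Finite H := Nat.finite_of_card_ne_zero (by rw [hcard]; exact pow_ne_zero 3 hp.ne_zero)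
  obtain ⟨k, hk, hZ⟩ := IsPGroup.card_center_eq_prime_pow hcard (by norm_num)
  have hQ : Nat.card (H ⧸ center H) ∣ p ^ 2 := by
    have hmul := card_eq_card_quotient_mul_card_subgroup (center H)
    rw [hcard, hZ] at hmul
    refine Nat.dvd_of_mul_dvd_mul_right hp.pos ?_
    rw [← pow_succ, hmul]
    exact mul_dvd_mul_left _ (dvd_pow_self p hk.ne')
  have hncyc : ¬ IsCyclic (H ⧸ center H) := fun _ ↦
    hna (isMulCommutative_of_isCyclic_quotient_center_self H)
  rw [← QuotientGroup.eq_one_iff, QuotientGroup.mk_pow]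
  by_contra hq
  have hord : orderOf (h : H ⧸ center H) = p ^ 2 :=
    orderOf_eq_prime_pow (n := 1) (by rwa [pow_one])
      (orderOf_dvd_iff_pow_eq_one.mp ((_root_.orderOf_dvd_natCard _).trans hQ))
  refine hncyc (isCyclic_of_orderOf_eq_card _ (hord.trans ?_))
  exact Nat.dvd_antisymm (hord ▸ _root_.orderOf_dvd_natCard _) hQ

section CentralProduct

variable {G : Type*} [Group G] {H C : Subgroup G}

theorem mem_center_of_sup_eq_top (hjoin : H ⊔ C = ⊤) {z : G} (hzH : z ∈ centralizer H)
    (hzC : z ∈ centralizer C) : z ∈ center G := by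
  have hle : H ⊔ C ≤ centralizer (zpowers z) :=
    sup_le (le_centralizer_iff.mp (zpowers_le.mpr hzH)) (le_centralizer_iff.mp (zpowers_le.mpr hzC))
  rw [hjoin, top_le_iff, centralizer_eq_top_iff_subset] at hle
  exact hle (mem_zpowers z)

theorem le_center_of_sup_eq_top [IsMulCommutative C] (hjoin : H ⊔ C = ⊤)
    (hHC : C ≤ centralizer H) : C ≤ center G :=
  fun _ hc ↦ mem_center_of_sup_eq_top hjoin (hHC hc) (le_centralizer C hc)

theorem pow_mem_center_of_sup_eq_top {p : ℕ} (hjoin : H ⊔ C = ⊤) (hC : C ≤ center G)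
    (hH : ∀ h : H, h ^ p ∈ center H) (g : G) : g ^ p ∈ center G := by
  have := normal_of_le_center_s6 hC
  obtain ⟨h, hh, c, hc, rfl⟩ := mem_sup_of_normal_right.mp (hjoin ▸ mem_top g)
  rw [Commute.mul_pow (mem_center_iff.mp (hC hc) h)]
  refine mul_mem (mem_center_of_sup_eq_top hjoin (fun a ha ↦ ?_) (fun c' hc' ↦ ?_)) (pow_mem (hC hc) p)
  · simpa using congrArg Subtype.val (mem_center_iff.mp (hH ⟨h, hh⟩) ⟨a, ha⟩)
  · exact (mem_center_iff.mp (hC hc') _).symm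

end CentralProduct

theorem isMulCommutative_of_index_eq_prime_of_rank_le_two {p : ℕ} (hp : p.Prime) {K : Type*}
    [Group K] [Finite K] {Λ : Subgroup K} (hΛ : Λ ≤ center K) (hpow : ∀ k : K, k ^ p ∈ Λ)
    (hcomm : ∀ u v : K, ⁅u, v⁆ ∈ Λ) (hrank : Group.rank K ≤ 2) {N : Subgroup K} [N.Normal]
    (hN : N.index = p) : IsMulCommutative N := by
  classical
  have : Fact p.Prime := ⟨hp⟩
  obtain ⟨S, hScard, hS⟩ := Group.rank_spec K
  set J := N ⊓ Λ
  have hJ : J ≤ center K := inf_le_right.trans hΛ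
  have := normal_of_le_center_s6 hJ
  set π := QuotientGroup.mk' J
  have hπ : Function.Surjective π := QuotientGroup.mk'_surjective J
  have hker : π.ker = J := QuotientGroup.ker_mk' J
  have hexp : ∀ q : K ⧸ J, q ^ p = 1 := by
    intro q
    obtain ⟨k, rfl⟩ := hπ q
    rw [← map_pow, ← π.mem_ker, hker]
    exact ⟨hN ▸ N.pow_index_mem k, hpow k⟩
  have hKN : IsMulCommutative (K ⧸ N) := by
    have : IsCyclic (K ⧸ N) := isCyclic_of_prime_card (by rw [← index_eq_card, hN])
    infer_instance
  let : CommGroup (K ⧸ J) :=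
    { mul_comm := by
        intro q r
        obtain ⟨u, rfl⟩ := hπ q
        obtain ⟨v, rfl⟩ := hπ r
        rw [← commutatorElement_eq_one_iff_mul_comm, ← map_commutatorElement, ← π.mem_ker, hker]
        refine ⟨(QuotientGroup.eq_one_iff _).mp ?_, hcomm u v⟩
        rw [← QuotientGroup.mk'_apply, map_commutatorElement, commutatorElement_eq_one_iff_mul_comm]
        exact isMulCommutative_iff.mp hKN _ _ }
  have hcard : Nat.card (K ⧸ J) ≤ p ^ 2 := by
    refine (card_le_pow_card_of_closure_eq_top hp.pos hexp (S := S.image π) ?_).trans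
      (Nat.pow_le_pow_right hp.pos (Finset.card_image_le.trans (hScard ▸ hrank)))
    rw [Finset.coe_image, ← MonoidHom.map_closure, hS, map_top_of_surjective _ hπ]
  have hQ : IsPGroup p (K ⧸ J) := fun q ↦ ⟨1, by rw [pow_one, hexp]⟩
  have hdvd : Nat.card (N.map π) ∣ p := hQ.card_dvd_prime_of_index_eq_prime hcard
    (by rw [index_map_eq _ hπ (by rw [hker]; exact inf_le_left), hN])
  have := isCyclic_of_card_dvd_prime hdvd
  refine (π.subgroupMap N).isMulCommutative_of_isCyclic_of_ker_le_center fun x hx ↦ ?_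
  have hxJ : (x : K) ∈ J := by
    rw [← hker, π.mem_ker]
    exact congrArg Subtype.val hx
  exact mem_center_iff.mpr fun g ↦ Subtype.ext (mem_center_iff.mp (hJ hxJ) g)

theorem stmt6_general {p : ℕ} (hp : p.Prime) {G : Type*} [Group G] [Finite G]
    (hG : IsPGroup p G)
    {H C : Subgroup G} (hH : ¬ ∀ a ∈ H, ∀ b ∈ H, a * b = b * a)
    (hHcard : Nat.card H = p ^ 3) (hC : IsCyclic ↥C)
    (hjoin : H ⊔ C = ⊤) (hcomm : ∀ h ∈ H, ∀ c ∈ C, h * c = c * h)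
    (hint : H ⊓ C = commutator G) :
    ∀ K : Subgroup G, IsAGroup p 2 ↥K → 3 ≤ Group.rank ↥K := by
  have : Fact p.Prime := ⟨hp⟩
  have hCcen : C ≤ center G := le_center_of_sup_eq_top hjoin fun c hc h hh ↦ hcomm h hh c hc
  have hpow : ∀ g : G, g ^ p ∈ center G := pow_mem_center_of_sup_eq_top hjoin hCcen
    (pow_mem_center_of_card_eq_prime_pow_three hp hHcard (mt isMulCommutative_iff_of_setLike.mp hH))
  have hcommutator : commutator G ≤ center G := hint ▸ inf_le_right.trans hCcen
  rintro K ⟨⟨N, hNidx, hNna⟩, -⟩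
  rw [show 2 - 1 = 1 from rfl, pow_one] at hNidx
  have := (hG.to_subgroup K).normal_of_index_eq_prime hNidx
  by_contra! hrank
  refine hNna (isMulCommutative_iff_of_setLike.mp ?_)
  exact isMulCommutative_of_index_eq_prime_of_rank_le_two hp K.comap_subtype_center_le_center
    (fun k ↦ hpow k) (fun u v ↦ hcommutator (commutator_mem_commutator (mem_top u) (mem_top v)))
    (by omega) hNidx

theorem stmt6 {p : ℕ} (hp : p.Prime) (hodd : Odd p) {G : Type*} [Group G] [Finite G]
    (hG : IsPGroup p G) (hG' : Nat.card (commutator G) = p)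
    {H C : Subgroup G} (hH : ¬ ∀ a ∈ H, ∀ b ∈ H, a * b = b * a)
    (hHcard : Nat.card H = p ^ 3) (hC : IsCyclic ↥C)
    (hjoin : H ⊔ C = ⊤) (hcomm : ∀ h ∈ H, ∀ c ∈ C, h * c = c * h)
    (hint : H ⊓ C = commutator G) :
    ∀ K : Subgroup G, IsAGroup p 2 ↥K → 3 ≤ Group.rank ↥K :=
  stmt6_general hp hG hH hHcard hC hjoin hcomm hint
end

section
/- Let M be a finite p-group which is an A_t-group and let A be an abelian p-group of order p^k. Then the direct product G = M × A is an A_{t+k}-group. -/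
/-- In a finite `p`-group that is an `𝒜_t`-group, every subgroup of index `p ^ s`
with `t ≤ s` is abelian. -/
lemma aux_abelian_of_le_index {p t : ℕ} (hp : p.Prime) {M : Type*} [Group M] [Finite M]
    (hM : IsPGroup p M) (hMt : IsAGroup p t M) {s : ℕ} (hts : t ≤ s)
    (K : Subgroup M) (hK : K.index = p ^ s) : ∀ a ∈ K, ∀ b ∈ K, a * b = b * a := by
  haveI : Fact p.Prime := ⟨hp⟩
  obtain ⟨m, hm⟩ := IsPGroup.iff_card.mp hM
  have hcard : Nat.card K * p ^ s = p ^ m := by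
    rw [← hK, Subgroup.card_mul_index, hm]
  have hsm : s ≤ m := by
    have : p ^ s ∣ p ^ m := Dvd.intro_left _ hcard
    exact (Nat.pow_dvd_pow_iff_le_right hp.one_lt).mp this
  have hKcard : Nat.card K = p ^ (m - s) := by
    have : p ^ (m - s) * p ^ s = p ^ m := by
      rw [← pow_add, Nat.sub_add_cancel hsm]
    have hpos : 0 < p ^ s := pow_pos hp.pos s
    exact Nat.eq_of_mul_eq_mul_right hpos (by rw [hcard, this])
  have htm : t ≤ m := hts.trans hsm
  obtain ⟨L, hLcard, hKL⟩ := Sylow.exists_subgroup_card_pow_prime_le p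
    (n := m - s) (m := m - t)
    (by rw [hm]; exact pow_dvd_pow p (Nat.sub_le m t)) K hKcard
    (Nat.sub_le_sub_left hts m)
  have hLindex : L.index = p ^ t := by
    have h1 : Nat.card L * L.index = p ^ m := by rw [Subgroup.card_mul_index, hm]
    have h2 : p ^ (m - t) * p ^ t = p ^ m := by rw [← pow_add, Nat.sub_add_cancel htm]
    have hpos : 0 < p ^ (m - t) := pow_pos hp.pos _
    rw [hLcard] at h1
    exact Nat.eq_of_mul_eq_mul_left hpos (by rw [h1, h2])
  intro a ha b hb
  exact hMt.2 L hLindex a (hKL ha) b (hKL hb)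

theorem stmt8 {p t k : ℕ} (hp : p.Prime) (ht : 0 < t) (hk : 0 < k)
    {M A : Type*} [Group M] [Finite M] [CommGroup A] [Finite A]
    (hM : IsPGroup p M) (hMt : IsAGroup p t M) (hA : Nat.card A = p ^ k) :
    IsAGroup p (t + k) (M × A) := by
  haveI : Fact p.Prime := ⟨hp⟩
  constructor
  · -- a non-abelian subgroup of index p^(t+k-1)
    obtain ⟨H, hHi, hHna⟩ := hMt.1
    refine ⟨H.prod ⊥, ?_, ?_⟩
    · rw [Subgroup.index_prod, hHi, Subgroup.index_bot, hA, ← pow_add]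
      congr 1
      omega
    · intro hcomm
      apply hHna
      intro a ha b hb
      have := hcomm (a, 1) ⟨ha, Subgroup.mem_bot.mpr rfl⟩ (b, 1) ⟨hb, Subgroup.mem_bot.mpr rfl⟩
      exact congrArg Prod.fst this
  · -- every subgroup of index p^(t+k) is abelian
    intro H hH a ha b hb
    set K := H.map (MonoidHom.fst M A) with hKdef
    -- K has index p^s with t ≤ s
    have hsurj : Function.Surjective (MonoidHom.fst M A) := fun m => ⟨(m, 1), rfl⟩
    have hHle : H ≤ K.comap (MonoidHom.fst M A) := fun x hx =>
      Subgroup.mem_comap.mpr (Subgroup.mem_map_of_mem _ hx)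
    have hdvd : K.index ∣ p ^ (t + k) := by
      rw [← hH, ← Subgroup.index_comap_of_surjective K hsurj]
      exact Subgroup.index_dvd_of_le hHle
    obtain ⟨s, hs, hKi⟩ := (Nat.dvd_prime_pow hp).mp hdvd
    -- card K ≤ card H
    have hcardle : Nat.card K ≤ Nat.card H := by
      have : Function.Surjective (fun x : H => (⟨(MonoidHom.fst M A) x, Subgroup.mem_map_of_mem _ x.2⟩ : K)) := by
        rintro ⟨y, hy⟩
        obtain ⟨x, hx, rfl⟩ := hy
        exact ⟨⟨x, hx⟩, rfl⟩
      exact Nat.card_le_card_of_surjective _ this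
    -- deduce t ≤ s
    obtain ⟨m, hm⟩ := IsPGroup.iff_card.mp hM
    have hHpos : 0 < Nat.card H := Nat.card_pos
    have hcardH : Nat.card H * p ^ (t + k) = p ^ m * p ^ k := by
      rw [← hH, ← hA, ← hm, Subgroup.card_mul_index, Nat.card_prod]
    have hcardH' : Nat.card H * p ^ t = p ^ m := by
      have hpos : 0 < p ^ k := pow_pos hp.pos k
      apply Nat.eq_of_mul_eq_mul_right hpos
      calc Nat.card H * p ^ t * p ^ k = Nat.card H * p ^ (t + k) := by
            rw [mul_assoc, ← pow_add]
        _ = p ^ m * p ^ k := hcardH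
    have hcardK : Nat.card K * p ^ s = p ^ m := by
      rw [← hKi, Subgroup.card_mul_index, hm]
    have hts : t ≤ s := by
      by_contra hcon
      push_neg at hcon
      have h1 : p ^ s < p ^ t := Nat.pow_lt_pow_right hp.one_lt hcon
      have h2 : Nat.card K * p ^ s ≤ Nat.card H * p ^ s :=
        Nat.mul_le_mul_right _ hcardle
      have h3 : Nat.card H * p ^ s < Nat.card H * p ^ t :=
        (Nat.mul_lt_mul_left hHpos).mpr h1
      omega
    -- K is abelian, hence H is abelian
    have hKab := aux_abelian_of_le_index hp hM hMt hts K hKi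
    have h1 : a.1 * b.1 = b.1 * a.1 :=
      hKab a.1 (Subgroup.mem_map_of_mem _ ha) b.1 (Subgroup.mem_map_of_mem _ hb)
    exact Prod.ext h1 (mul_comm a.2 b.2)
end

section
/- Let M be a finite p-group which is an A_t-group with |M'| = p, and let G = M * A be a central product where A is an abelian group of order p^{k+1} with M ∩ A = M'. Then G is an A_{t+k}-group. -/
/-!
Since `A` is central and `G = MA`, every commutator of `G` is a commutator of `M`, and
`|G : M| = |A : M ∩ A| = p^k`; so a non-abelian subgroup of `M` of index `p^(t-1)` has index
`p^(t+k-1)` in `G`. If `H ≤ G` of index `p^(t+k)` were non-abelian, a non-trivial commutator of `H`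
would lie in `H ∩ A`, giving `|HA : H| = |A : H ∩ A| ≤ p^k`, while `HA ∩ M` is non-abelian, giving
`|G : HA| = |M : HA ∩ M| < p^t`. Then `|G : H| < p^(t+k)`.
-/

open scoped commutatorElement

namespace Subgroup

variable {G : Type*} [Group G]

theorem card_inf_mul_relIndex (H K : Subgroup G) :
    Nat.card ↥(H ⊓ K) * H.relIndex K = Nat.card K := by
  rw [← relIndex_bot_left, ← inf_relIndex_right H K,
    relIndex_mul_relIndex ⊥ _ _ bot_le inf_le_right, relIndex_bot_left]

theorem relIndex_sup_right_of_normal [Finite G] (H K : Subgroup G) [K.Normal] :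
    H.relIndex (H ⊔ K) = H.relIndex K := by
  have hH := card_inf_mul_relIndex H (H ⊔ K)
  have hK := card_inf_mul_relIndex K (H ⊔ K)
  rw [inf_of_le_left le_sup_left] at hH
  rw [inf_of_le_left le_sup_right, relIndex_sup_right] at hK
  have hHK := card_inf_mul_relIndex H K
  have hKH := card_inf_mul_relIndex K H
  rw [inf_comm] at hKH
  have hpos : 0 < Nat.card ↥(H ⊓ K) * K.relIndex H := hKH ▸ Nat.card_pos
  refine Nat.eq_of_mul_eq_mul_left hpos ?_
  calc Nat.card ↥(H ⊓ K) * K.relIndex H * H.relIndex (H ⊔ K)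
      = Nat.card K * K.relIndex H := by rw [hKH, hH, hK]
    _ = Nat.card ↥(H ⊓ K) * K.relIndex H * H.relIndex K := by rw [← hHK]; ring

theorem index_eq_relIndex_of_sup_eq_top [Finite G] {H K : Subgroup G} [K.Normal]
    (h : H ⊔ K = ⊤) :
    H.index = H.relIndex K := by
  rw [← relIndex_sup_right_of_normal, h, relIndex_top_right]

theorem normal_of_le_center_s9 {Z : Subgroup G} (hZ : Z ≤ center G) : Z.Normal :=
  ⟨fun n hn g => by rw [mem_center_iff.mp (hZ hn) g, mul_inv_cancel_right]; exact hn⟩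

theorem normal_of_sup_eq_top_of_le_center {M Z : Subgroup G} (h : M ⊔ Z = ⊤)
    (hZ : Z ≤ center G) : M.Normal :=
  normalizer_eq_top_iff.mp <| top_le_iff.mp <|
    h ▸ sup_le le_normalizer (hZ.trans (center_le_normalizer _))

theorem le_center_of_sup_eq_top {M A : Subgroup G} (h : M ⊔ A = ⊤)
    (hA : ∀ a ∈ A, ∀ b ∈ A, a * b = b * a) (hMA : ∀ m ∈ M, ∀ a ∈ A, m * a = a * m) :
    A ≤ center G := by
  rw [← SetLike.coe_subset_coe, ← centralizer_eq_top_iff_subset, eq_top_iff, ← h]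
  exact sup_le (fun m hm a ha => (hMA m hm a ha).symm) (fun b hb a ha => hA a ha b hb)

end Subgroup

theorem commutatorElement_mul_mem_center {G : Type*} [Group G] {z w : G}
    (hz : z ∈ Subgroup.center G) (hw : w ∈ Subgroup.center G) (x y : G) :
    ⁅x * z, y * w⁆ = ⁅x, y⁆ := by
  have hzc : ⁅z, y * w⁆ = 1 :=
    commutatorElement_eq_one_iff_mul_comm.mpr (Subgroup.mem_center_iff.mp hz _).symm
  have hwc : ⁅x, w⁆ = 1 :=
    commutatorElement_eq_one_iff_mul_comm.mpr (Subgroup.mem_center_iff.mp hw x)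
  rw [commutatorElement_mul_left_eq_conj_mul, hzc, commutatorElement_mul_right_eq_mul_conj, hwc]
  group

theorem IsPGroup.index_lt_of_not_commute {p t : ℕ} [hp : Fact p.Prime] {P : Type*} [Group P]
    [Finite P] (hP : IsPGroup p P)
    (hcomm : ∀ L : Subgroup P, L.index = p ^ t → ∀ a ∈ L, ∀ b ∈ L, a * b = b * a)
    {K : Subgroup P} {a b : P} (ha : a ∈ K) (hb : b ∈ K) (hab : a * b ≠ b * a) :
    K.index < p ^ t := by
  obtain ⟨n, hn⟩ := hP.exists_card_eq
  obtain ⟨s, hsn, hs⟩ := (Nat.dvd_prime_pow hp.out).mp (hn ▸ K.index_dvd_card)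
  by_contra! hts
  have hst : t ≤ s := (Nat.pow_le_pow_iff_right hp.out.one_lt).mp (hs ▸ hts)
  have hK : Nat.card K = p ^ (n - s) := by
    refine Nat.eq_of_mul_eq_mul_right (pow_pos hp.out.pos s) ?_
    rw [← pow_add, Nat.sub_add_cancel hsn, ← hn, ← hs, K.card_mul_index]
  obtain ⟨L, hL, hKL⟩ := Sylow.exists_subgroup_card_pow_prime_le p
    (hn ▸ pow_dvd_pow p (Nat.sub_le n t)) K hK (by omega)
  have hLidx : L.index = p ^ t := by
    refine Nat.eq_of_mul_eq_mul_left (pow_pos hp.out.pos (n - t)) ?_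
    rw [← pow_add, Nat.sub_add_cancel (hst.trans hsn), ← hn, ← hL, L.card_mul_index]
  exact hab (hcomm L hLidx a (hKL ha) b (hKL hb))

theorem IsPGroup.relIndex_le_of_mem_inf {p k : ℕ} [hp : Fact p.Prime] {G : Type*} [Group G]
    [Finite G] (hG : IsPGroup p G) {H A : Subgroup G} (hA : Nat.card A = p ^ (k + 1))
    {x : G} (hx : x ∈ H ⊓ A) (hx1 : x ≠ 1) : H.relIndex A ≤ p ^ k := by
  have : Nontrivial ↥(H ⊓ A) := nontrivial_of_ne ⟨x, hx⟩ 1 (by simpa using hx1)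
  obtain ⟨n, hn, hcard⟩ := (hG.to_subgroup (H ⊓ A)).nontrivial_iff_card.mp this
  have hp_le : p ≤ Nat.card ↥(H ⊓ A) :=
    hcard ▸ Nat.le_self_pow (Nat.pos_iff_ne_zero.mp hn) p
  refine Nat.le_of_mul_le_mul_left ?_ hp.out.pos
  calc p * H.relIndex A ≤ Nat.card ↥(H ⊓ A) * H.relIndex A := Nat.mul_le_mul_right _ hp_le
    _ = p * p ^ k := by rw [Subgroup.card_inf_mul_relIndex, hA, pow_succ']

open Subgroup in
theorem commute_of_index_eq_pow_add {p t k : ℕ} [hp : Fact p.Prime] {G : Type*} [Group G]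
    [Finite G] (hG : IsPGroup p G) {M A H : Subgroup G}
    (hMt : ∀ L : Subgroup M, L.index = p ^ t → ∀ a ∈ L, ∀ b ∈ L, a * b = b * a)
    (hAZ : A ≤ center G) (hAcard : Nat.card A = p ^ (k + 1)) (hjoin : M ⊔ A = ⊤)
    (hM'A : ∀ x ∈ M, ∀ y ∈ M, ⁅x, y⁆ ∈ A) (hH : H.index = p ^ (t + k)) :
    ∀ a ∈ H, ∀ b ∈ H, a * b = b * a := by
  have := normal_of_le_center_s9 hAZ
  have := normal_of_sup_eq_top_of_le_center hjoin hAZ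
  intro a ha b hb
  by_contra hab
  obtain ⟨m₁, hm₁, z₁, hz₁, rfl⟩ := mem_sup_of_normal_right.mp (hjoin ▸ mem_top a)
  obtain ⟨m₂, hm₂, z₂, hz₂, rfl⟩ := mem_sup_of_normal_right.mp (hjoin ▸ mem_top b)
  have hc : ⁅m₁ * z₁, m₂ * z₂⁆ = ⁅m₁, m₂⁆ :=
    commutatorElement_mul_mem_center (hAZ hz₁) (hAZ hz₂) _ _
  have hcH : ⁅m₁ * z₁, m₂ * z₂⁆ ∈ H := by
    rw [commutatorElement_def]; exact mul_mem (mul_mem (mul_mem ha hb) (inv_mem ha)) (inv_mem hb)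
  have hc1 : ⁅m₁ * z₁, m₂ * z₂⁆ ≠ 1 := mt commutatorElement_eq_one_iff_mul_comm.mp hab
  have hHA : H.relIndex A ≤ p ^ k :=
    hG.relIndex_le_of_mem_inf hAcard ⟨hcH, hc ▸ hM'A _ hm₁ _ hm₂⟩ hc1
  set N := H ⊔ A
  have hmN : ∀ {m z : G}, z ∈ A → m * z ∈ H → m ∈ N := fun hz hmz => by
    simpa using mul_mem (mem_sup_left hmz) (inv_mem (mem_sup_right hz))
  have hNM : N.relIndex M < p ^ t := by
    refine (hG.to_subgroup M).index_lt_of_not_commute hMt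
      (a := ⟨m₁, hm₁⟩) (b := ⟨m₂, hm₂⟩)
      (mem_subgroupOf.mpr (hmN hz₁ ha)) (mem_subgroupOf.mpr (hmN hz₂ hb)) fun h => hc1 ?_
    rw [hc, commutatorElement_eq_one_iff_mul_comm]; exact congrArg Subtype.val h
  have hNMtop : N ⊔ M = ⊤ :=
    top_le_iff.mp (hjoin ▸ sup_le le_sup_right (le_sup_right.trans le_sup_left))
  have hidx : H.index = H.relIndex A * N.relIndex M := by
    rw [← relIndex_mul_index (le_sup_left : H ≤ N), relIndex_sup_right_of_normal,
      index_eq_relIndex_of_sup_eq_top hNMtop]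
  have : H.index < p ^ (t + k) :=
    calc H.index ≤ p ^ k * N.relIndex M := hidx ▸ Nat.mul_le_mul_right _ hHA
      _ < p ^ k * p ^ t := Nat.mul_lt_mul_of_pos_left hNM (pow_pos hp.out.pos k)
      _ = p ^ (t + k) := by rw [← pow_add, add_comm]
  exact this.ne hH

theorem stmt9 {p t k : ℕ} (hp : p.Prime) (ht : 0 < t)
    {G : Type*} [Group G] [Finite G] (hG : IsPGroup p G)
    {M A : Subgroup G} (hMt : IsAGroup p t ↥M)
    (hM' : Nat.card (commutator ↥M) = p)
    (hA : ∀ a ∈ A, ∀ b ∈ A, a * b = b * a) (hAcard : Nat.card A = p ^ (k + 1))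
    (hjoin : M ⊔ A = ⊤) (hcomm : ∀ m ∈ M, ∀ a ∈ A, m * a = a * m)
    (hint : M ⊓ A = (commutator ↥M).map M.subtype) :
    IsAGroup p (t + k) G := by
  have : Fact p.Prime := ⟨hp⟩
  have hAZ := Subgroup.le_center_of_sup_eq_top hjoin hA hcomm
  have := Subgroup.normal_of_le_center_s9 hAZ
  have hMA : Nat.card ↥(M ⊓ A) = p := by
    rw [hint, Subgroup.card_map_of_injective M.subtype_injective, hM']
  have hMidx : M.index = p ^ k := by
    have h := Subgroup.card_inf_mul_relIndex M A
    rw [hMA, hAcard, pow_succ', ← Subgroup.index_eq_relIndex_of_sup_eq_top hjoin] at h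
    exact Nat.eq_of_mul_eq_mul_left hp.pos h
  refine ⟨?_, fun H hH => commute_of_index_eq_pow_add hG hMt.2 hAZ hAcard hjoin ?_ hH⟩
  · obtain ⟨K, hK, hKnc⟩ := hMt.1
    refine ⟨K.map M.subtype, ?_, fun h => hKnc fun x hx y hy => Subtype.ext ?_⟩
    · rw [Subgroup.index_map_subtype, hK, hMidx, ← pow_add]
      congr 1; omega
    · exact h _ (Subgroup.mem_map_of_mem _ hx) _ (Subgroup.mem_map_of_mem _ hy)
  · intro x hx y hy
    have := Subgroup.mem_map_of_mem M.subtype <|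
      Subgroup.commutator_mem_commutator (Subgroup.mem_top ⟨x, hx⟩) (Subgroup.mem_top ⟨y, hy⟩)
    rw [← commutator_def, ← hint] at this
    exact this.2
end

section
/- Let G be a finite p-group with a unique A₂-subgroup K and |G'| = p. Then K is not contained in the Frattini subgroup Φ(G). -/
/-! The normal subgroup `G'` of order `p` is central, hence `[g, x] ^ p = 1` commutes with `x`
and every `p`-th power is central. So `G / Z(G)` is elementary abelian, every element outside
`Z(G)` is avoided by some maximal subgroup, and `Φ(G) ≤ Z(G)` is abelian; the non-abelian group
`K` therefore cannot lie in `Φ(G)`. -/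

open Subgroup
open scoped commutatorElement

theorem IsPGroup.le_center_of_card_eq_prime_s12 {p : ℕ} [Fact p.Prime] {G : Type*} [Group G]
    [Finite G] (hG : IsPGroup p G) {N : Subgroup G} [N.Normal] (hN : Nat.card N = p) :
    N ≤ center G := by
  -- a nontrivial fixed point of the conjugation action on `N` generates `N`
  obtain ⟨b, hb, hb1⟩ := (hG.of_equiv ConjAct.toConjAct)
    |>.exists_fixed_point_of_prime_dvd_card_of_fixed_point N (hN ▸ dvd_rfl) (a := 1)
      (fun _ => smul_one _)
  have hbZ : (b : G) ∈ center G := mem_center_iff.mpr fun g => by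
    have := congrArg Subtype.val (hb (ConjAct.toConjAct g))
    rw [ConjAct.Subgroup.val_conj_smul, ConjAct.smul_def, ConjAct.ofConjAct_toConjAct] at this
    exact mul_inv_eq_iff_eq_mul.mp this
  calc N = (zpowers b).map N.subtype := by
          rw [zpowers_eq_top_of_prime_card hN (Ne.symm hb1), ← MonoidHom.range_eq_map,
            range_subtype]
    _ = zpowers (b : G) := MonoidHom.map_zpowers _ _
    _ ≤ center G := zpowers_le.mpr hbZ

theorem commute_pow_of_commute_commutatorElement {G : Type*} [Group G] {g x : G} {n : ℕ}
    (hc : Commute ⁅g, x⁆ x) (hn : ⁅g, x⁆ ^ n = 1) : Commute g (x ^ n) := by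
  have hconj : g * x ^ n * g⁻¹ = x ^ n := by
    rw [← conj_pow, show g * x * g⁻¹ = ⁅g, x⁆ * x by rw [commutatorElement_def]; group,
      hc.mul_pow, hn, one_mul]
  exact mul_inv_eq_iff_eq_mul.mp hconj

theorem pow_card_commutator_mem_center {G : Type*} [Group G]
    (hGc : commutator G ≤ center G) (x : G) : x ^ Nat.card (commutator G) ∈ center G := by
  refine mem_center_iff.mpr fun g => commute_pow_of_commute_commutatorElement ?_ ?_
  all_goals
    have hgx : ⁅g, x⁆ ∈ commutator G := commutator_mem_commutator (mem_top g) (mem_top x)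
  · exact (mem_center_iff.mp (hGc hgx) x).symm
  · exact orderOf_dvd_iff_pow_eq_one.mp ((commutator G).orderOf_dvd_natCard hgx)

theorem Subgroup.mem_of_pow_prime_mem_of_zpow_mem {p : ℕ} (hp : p.Prime) {G : Type*} [Group G]
    {H : Subgroup G} {g : G} {k : ℤ} (hgp : g ^ p ∈ H) (hgk : g ^ k ∈ H)
    (hpk : ¬ (p : ℤ) ∣ k) : g ∈ H := by
  obtain ⟨u, v, huv⟩ := ((Nat.prime_iff_prime_int.mp hp).coprime_iff_not_dvd).mpr hpk
  have hg : g = (g ^ (p : ℤ)) ^ u * (g ^ k) ^ v := by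
    rw [← zpow_mul, ← zpow_mul, ← zpow_add, mul_comm _ u, mul_comm k, huv, zpow_one]
  rw [hg]
  exact H.mul_mem (H.zpow_mem (by exact_mod_cast hgp) u) (H.zpow_mem hgk v)

theorem exists_isCoatom_notMem_of_commutator_le {p : ℕ} (hp : p.Prime) {G : Type*} [Group G]
    [Finite G] {N : Subgroup G} (hGN : commutator G ≤ N) (hpow : ∀ g : G, g ^ p ∈ N) {x : G}
    (hx : x ∉ N) : ∃ M : Subgroup G, IsCoatom M ∧ x ∉ M := by
  obtain ⟨M, hNM, ⟨-, hxM⟩, hmax⟩ :=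
    Finite.exists_le_maximal (p := fun M : Subgroup G => N ≤ M ∧ x ∉ M) ⟨le_rfl, hx⟩
  have : M.Normal := .of_commutator_le G (hGN.trans hNM)
  have hpowM : ∀ g : G, g ^ p ∈ M := fun g => hNM (hpow g)
  have mem_sup_zpowers : ∀ g ∉ M, x ∈ M ⊔ zpowers g := fun g hg => by
    by_contra hx'
    exact hg <| le_sup_right.trans (hmax ⟨hNM.trans le_sup_left, hx'⟩ le_sup_left)
      (mem_zpowers g)
  refine ⟨M, ⟨fun h => hxM (h ▸ mem_top x), fun H hMH => ?_⟩, hxM⟩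
  obtain ⟨g, hgH, hgM⟩ := SetLike.exists_of_lt hMH
  have hxH : x ∈ H := sup_le hMH.le (zpowers_le.mpr hgH) (mem_sup_zpowers g hgM)
  refine eq_top_iff.mpr fun h _ => ?_
  by_cases hhM : h ∈ M
  · exact hMH.le hhM
  -- exchange: `x = m * h ^ k` with `p ∤ k`, so `h ^ k ∈ M ⊔ zpowers x ≤ H`
  obtain ⟨m, hm, y, hy, hmk⟩ := mem_sup_of_normal_left.mp (mem_sup_zpowers h hhM)
  obtain ⟨k, rfl⟩ := mem_zpowers_iff.mp hy
  refine H.mem_of_pow_prime_mem_of_zpow_mem hp (k := k) (hMH.le (hpowM h)) ?_ ?_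
  · simpa [← hmk] using H.mul_mem (H.inv_mem (hMH.le hm)) hxH
  · rintro ⟨t, rfl⟩
    rw [zpow_mul] at hmk
    exact hxM (hmk ▸ M.mul_mem hm (M.zpow_mem (by exact_mod_cast hpowM h) t))

theorem frattini_le_of_commutator_le_of_pow_mem {p : ℕ} (hp : p.Prime) {G : Type*} [Group G]
    [Finite G] {N : Subgroup G} (hGN : commutator G ≤ N) (hpow : ∀ g : G, g ^ p ∈ N) :
    frattini G ≤ N := fun x hx => by
  by_contra hxN
  obtain ⟨M, hM, hxM⟩ := exists_isCoatom_notMem_of_commutator_le hp hGN hpow hxN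
  exact hxM (frattini_le_coatom hM hx)

theorem IsPGroup.frattini_le_center_of_card_commutator_eq {p : ℕ} (hp : p.Prime) {G : Type*}
    [Group G] [Finite G] (hG : IsPGroup p G) (hG' : Nat.card (commutator G) = p) :
    frattini G ≤ center G := by
  have : Fact p.Prime := ⟨hp⟩
  have hGc : commutator G ≤ center G := hG.le_center_of_card_eq_prime_s12 hG'
  exact frattini_le_of_commutator_le_of_pow_mem hp hGc
    fun x => hG' ▸ pow_card_commutator_mem_center hGc x

theorem stmt12_general {p : ℕ} (hp : p.Prime) {G : Type*} [Group G] [Finite G]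
    (hG : IsPGroup p G) (hG' : Nat.card (commutator G) = p)
    {K : Subgroup G} (hK : IsAGroup p 2 ↥K) :
    ¬ K ≤ frattini G := by
  intro hKΦ
  have hΦ := hG.frattini_le_center_of_card_commutator_eq hp hG'
  obtain ⟨⟨H, -, hH⟩, -⟩ := hK
  exact hH fun a _ b _ => Subtype.ext (mem_center_iff.mp (hΦ (hKΦ b.2)) a)

theorem stmt12 {p : ℕ} (hp : p.Prime) {G : Type*} [Group G] [Finite G]
    (hG : IsPGroup p G) (hG' : Nat.card (commutator G) = p)
    {K : Subgroup G} (hK : IsAGroup p 2 ↥K)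
    (huniq : ∀ K' : Subgroup G, IsAGroup p 2 ↥K' → K' = K) :
    ¬ K ≤ frattini G :=
  stmt12_general hp hG hG' hK
end

section
/- Let G be a finite p-group with a unique A₂-subgroup K, and let N be a quotient G/Z where Z is a normal subgroup of G contained in K such that the image of K in G/Z is still an A₂-group. Then the image of K is the unique A₂-subgroup of G/Z. -/
/-!
In a finite `p`-group every subgroup `H ≤ M` lies in subgroups of every index `p ^ k` in `M`
dividing `|M : H|`. Hence a subgroup minimal among those having a non-abelian proper subgroup is
an `𝒜₂`-group, so every subgroup with a non-abelian proper subgroup contains an `𝒜₂`-subgroup.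

If `L` is an `𝒜₂`-subgroup of `G ⧸ Z`, the preimage of a non-abelian maximal subgroup of `L` is a
non-abelian proper subgroup of the preimage of `L`, which therefore contains an `𝒜₂`-subgroup;
by uniqueness this is `K`, so `K ⧸ Z ≤ L`. Were the inclusion strict, a non-abelian maximal
subgroup of `K ⧸ Z` would have index divisible by `p ^ 2` in `L`, hence lie in an abelian
subgroup of index `p ^ 2` of `L`.
-/

section Translation

variable {G : Type*} [Group G]

lemma Subgroup.comm_subgroupOf_iff {N M : Subgroup G} (hNM : N ≤ M) :
    (∀ a ∈ N.subgroupOf M, ∀ b ∈ N.subgroupOf M, a * b = b * a) ↔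
      ∀ a ∈ N, ∀ b ∈ N, a * b = b * a := by
  simp only [Subtype.forall, Subgroup.mem_subgroupOf, Subtype.ext_iff, Subgroup.coe_mul]
  exact ⟨fun h a ha b hb => h a (hNM ha) ha b (hNM hb) hb, fun h a _ ha b _ hb => h a ha b hb⟩

theorem isAGroup_iff {p t : ℕ} (M : Subgroup G) :
    IsAGroup p t M ↔
      (∃ N ≤ M, N.relIndex M = p ^ (t - 1) ∧ ¬ ∀ a ∈ N, ∀ b ∈ N, a * b = b * a) ∧
        ∀ N ≤ M, N.relIndex M = p ^ t → ∀ a ∈ N, ∀ b ∈ N, a * b = b * a := by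
  rw [IsAGroup, (Subgroup.MapSubtype.orderIso M).symm.surjective.exists, Subtype.exists,
    Subgroup.forall]
  simp only [Subgroup.MapSubtype.orderIso_symm_apply, exists_prop]
  refine and_congr (exists_congr fun N => and_congr_right fun hNM => ?_)
    (forall₂_congr fun N hNM => ?_) <;>
    rw [Subgroup.comm_subgroupOf_iff hNM, Subgroup.relIndex]

theorem isAGroup_two_iff {p : ℕ} (M : Subgroup G) :
    IsAGroup p 2 M ↔
      (∃ N ≤ M, N.relIndex M = p ∧ ¬ ∀ a ∈ N, ∀ b ∈ N, a * b = b * a) ∧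
        ∀ N ≤ M, N.relIndex M = p ^ 2 → ∀ a ∈ N, ∀ b ∈ N, a * b = b * a := by
  rw [isAGroup_iff, Nat.add_one_sub_one, pow_one]

end Translation

section PGroup

variable {p : ℕ} [hp : Fact p.Prime] {G : Type*} [Group G] [Finite G]

theorem IsPGroup.exists_le_index_eq_pow (hG : IsPGroup p G) {H : Subgroup G} {k : ℕ}
    (hk : p ^ k ∣ H.index) : ∃ H' : Subgroup G, H ≤ H' ∧ H'.index = p ^ k := by
  obtain ⟨m, hm⟩ := IsPGroup.iff_card.mp (hG.to_subgroup H)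
  obtain ⟨j, hj⟩ := hG.index H
  have hkj : k ≤ j := (Nat.pow_dvd_pow_iff_le_right hp.out.one_lt).mp (hj ▸ hk)
  have hcard : Nat.card G = p ^ (m + (j - k)) * p ^ k := by
    rw [← pow_add, ← H.card_mul_index, hm, hj, ← pow_add]
    congr 1
    omega
  obtain ⟨H', hH'card, hHH'⟩ := Sylow.exists_subgroup_card_pow_prime_le p
    (hcard ▸ dvd_mul_right _ _) H hm (Nat.le_add_right m (j - k))
  refine ⟨H', hHH', Nat.eq_of_mul_eq_mul_left (pow_pos hp.out.pos (m + (j - k))) ?_⟩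
  rw [← hH'card, H'.card_mul_index, hcard, hH'card]

theorem IsPGroup.exists_relIndex_eq_pow (hG : IsPGroup p G) {N M : Subgroup G} (hNM : N ≤ M)
    {k : ℕ} (hk : p ^ k ∣ N.relIndex M) :
    ∃ N' : Subgroup G, N ≤ N' ∧ N' ≤ M ∧ N'.relIndex M = p ^ k := by
  obtain ⟨H, hNH, hH⟩ := (hG.to_subgroup M).exists_le_index_eq_pow hk
  refine ⟨H.map M.subtype, ?_, M.map_subtype_le H, ?_⟩
  · rw [← Subgroup.map_subgroupOf_eq_of_le hNM]
    exact Subgroup.map_mono hNH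
  · rwa [Subgroup.relIndex, Subgroup.subgroupOf,
      Subgroup.comap_map_eq_self_of_injective M.subtype_injective]

theorem IsPGroup.prime_dvd_relIndex (hG : IsPGroup p G) {N M : Subgroup G} (hNM : N < M) :
    p ∣ N.relIndex M := by
  obtain ⟨j, hj⟩ := (hG.to_subgroup M).index (N.subgroupOf M)
  rw [Subgroup.relIndex, hj]
  refine dvd_pow_self p fun hj0 => hNM.not_ge ?_
  rw [← Subgroup.relIndex_eq_one, Subgroup.relIndex, hj, hj0, pow_zero]

theorem IsPGroup.exists_isAGroup_two_le (hG : IsPGroup p G) {N M : Subgroup G} (hNM : N < M)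
    (hN : ¬ ∀ a ∈ N, ∀ b ∈ N, a * b = b * a) : ∃ K ≤ M, IsAGroup p 2 K := by
  obtain ⟨K, hKM, hKmin⟩ := exists_minimal_le_of_wellFoundedLT
    (fun K : Subgroup G => ∃ N < K, ¬ ∀ a ∈ N, ∀ b ∈ N, a * b = b * a) M ⟨N, hNM, hN⟩
  refine ⟨K, hKM, (isAGroup_two_iff K).mpr ⟨?_, fun H hHK hH => ?_⟩⟩
  · obtain ⟨N, hNK, hN⟩ := hKmin.prop
    obtain ⟨N', hNN', hN'K, hN'⟩ :=
      hG.exists_relIndex_eq_pow hNK.le (k := 1) (by simpa using hG.prime_dvd_relIndex hNK)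
    exact ⟨N', hN'K, pow_one p ▸ hN', fun h => hN fun a ha b hb => h a (hNN' ha) b (hNN' hb)⟩
  · -- a non-abelian `H` of index `p ^ 2` lies properly in a maximal subgroup of `K`,
    -- contradicting the minimality of `K`
    by_contra hHc
    obtain ⟨H₁, hHH₁, hH₁K, hH₁⟩ :=
      hG.exists_relIndex_eq_pow hHK (k := 1) (hH ▸ pow_dvd_pow p one_le_two)
    have hH₁K' : H₁ < K := hH₁K.lt_of_ne fun h => hp.out.one_lt.ne' (by
      rwa [h, Subgroup.relIndex_self, pow_one, eq_comm] at hH₁)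
    have hHH₁' : H < H₁ := hHH₁.lt_of_ne fun h => by
      rw [h, hH₁] at hH
      exact absurd (Nat.pow_right_injective hp.out.two_le hH) (by norm_num)
    exact hKmin.not_prop_of_lt hH₁K' ⟨H, hHH₁', hHc⟩

theorem IsPGroup.eq_of_isAGroup_two_of_le (hG : IsPGroup p G) {N J L : Subgroup G}
    (hL : IsAGroup p 2 L) (hJL : J ≤ L) (hNJ : N ≤ J) (hN : N.relIndex J = p)
    (hNc : ¬ ∀ a ∈ N, ∀ b ∈ N, a * b = b * a) : J = L := by
  by_contra hne
  have hdvd : p ^ 2 ∣ N.relIndex L := by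
    rw [← Subgroup.relIndex_mul_relIndex N J L hNJ hJL, hN, sq]
    exact mul_dvd_mul_left p (hG.prime_dvd_relIndex (hJL.lt_of_ne hne))
  obtain ⟨N', hNN', hN'L, hN'⟩ := hG.exists_relIndex_eq_pow (hNJ.trans hJL) hdvd
  exact hNc fun a ha b hb => ((isAGroup_two_iff L).mp hL).2 N' hN'L hN' a (hNN' ha) b (hNN' hb)

theorem IsPGroup.exists_isAGroup_two_le_comap (hG : IsPGroup p G) {Q : Type*} [Group Q]
    {f : G →* Q} (hf : Function.Surjective f) {L : Subgroup Q} (hL : IsAGroup p 2 L) :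
    ∃ K ≤ L.comap f, IsAGroup p 2 K := by
  obtain ⟨⟨N, hNL, hN, hNc⟩, -⟩ := (isAGroup_two_iff L).mp hL
  have hNL' : N < L := hNL.lt_of_ne fun h => hp.out.one_lt.ne' (by
    rwa [h, Subgroup.relIndex_self, eq_comm] at hN)
  refine hG.exists_isAGroup_two_le ((Subgroup.comap_lt_comap_of_surjective hf).mpr hNL')
    fun h => hNc ?_
  rw [← Subgroup.map_comap_eq_self_of_surjective hf N]
  rintro _ ⟨a, ha, rfl⟩ _ ⟨b, hb, rfl⟩
  rw [← map_mul, ← map_mul, h a ha b hb]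

end PGroup

theorem stmt17_general {p : ℕ} (hp : p.Prime) {G : Type*} [Group G] [Finite G]
    (hG : IsPGroup p G) {K : Subgroup G}
    (huniq : ∀ K' : Subgroup G, IsAGroup p 2 ↥K' → K' = K)
    {Z : Subgroup G} [Z.Normal]
    (him : IsAGroup p 2 ↥(K.map (QuotientGroup.mk' Z))) :
    ∀ L : Subgroup (G ⧸ Z), IsAGroup p 2 ↥L → L = K.map (QuotientGroup.mk' Z) := by
  have := Fact.mk hp
  intro L hL
  obtain ⟨K', hK'L, hK'⟩ := hG.exists_isAGroup_two_le_comap (QuotientGroup.mk'_surjective Z) hL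
  have hKL : K.map (QuotientGroup.mk' Z) ≤ L :=
    Subgroup.map_le_iff_le_comap.mpr (huniq K' hK' ▸ hK'L)
  obtain ⟨⟨N, hNK, hN, hNc⟩, -⟩ := (isAGroup_two_iff _).mp him
  exact ((hG.to_quotient Z).eq_of_isAGroup_two_of_le hL hKL hNK hN hNc).symm

theorem stmt17 {p : ℕ} (hp : p.Prime) {G : Type*} [Group G] [Finite G]
    (hG : IsPGroup p G) {K : Subgroup G} (hK : IsAGroup p 2 ↥K)
    (huniq : ∀ K' : Subgroup G, IsAGroup p 2 ↥K' → K' = K)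
    {Z : Subgroup G} [Z.Normal] (hZK : Z ≤ K)
    (him : IsAGroup p 2 ↥(K.map (QuotientGroup.mk' Z))) :
    ∀ L : Subgroup (G ⧸ Z), IsAGroup p 2 ↥L → L = K.map (QuotientGroup.mk' Z) :=
  stmt17_general hp hG huniq him
end
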